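/- arXiv:2204.13891 — 2 statements merged into one kernel-verified Lean document; each statement's English description precedes it below -/
import Mathlib

section
/- For all z ∈ ℂ and all q ∈ ℕ, |G₄(z,q)| ≤ 2^{ω(q)} τ₄(q) ∏_{p | q} (1 + p^{−Re(z)})³ (1 + p^{Re(z)−1}), where ω(q) is the number of distinct prime factors of q. Moreover, if 1 − r ≤ Re(z) ≤ 1 + r for some r ∈ (0,1), then |G₄(z,q)| ≤ 32^{ω(q)} τ₄(q) q^r. -/
open Complex Filter Topology

noncomputable section

/-- The 4-fold divisor function: number of quadruples with product `n`. -/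
def tau4 (n : ℕ) : ℕ :=
  Nat.card {p : ℕ × ℕ × ℕ × ℕ // p.1 * p.2.1 * p.2.2.1 * p.2.2.2 = n}

/-- Ramanujan sum `c_q(r)`. -/
def ramanujanSum (q : ℕ) (r : ℤ) : ℂ :=
  ∑ d ∈ (Finset.range q).filter (fun d => Nat.Coprime d q),
    Complex.exp (-(2 * Real.pi * Complex.I * d * r) / q)

/-- The cubic polynomial `Q_j`. -/
def Qpoly (j : ℕ) (x : ℂ) : ℂ :=
  1 - (3*j/(j+1) : ℂ) * x + (3*j/(j+2) : ℂ) * x^2 - (j/(j+3) : ℂ) * x^3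

/-- The multiplicative function `g₄(z,·)` determined by
`∑_m τ₄(nm) m^{-z} = g₄(z,n) ζ(z)⁴`; on prime powers `g₄(z,p^α) = τ₄(p^α) Q_α(p^{-z})`. -/
def g4 (z : ℂ) (n : ℕ) : ℂ :=
  ∏ p ∈ n.primeFactors,
    (tau4 (p ^ (n.factorization p)) : ℂ) * Qpoly (n.factorization p) ((p:ℂ) ^ (-z))

/-- The function `G₄(z,n)`. -/
def G4 (z : ℂ) (n : ℕ) : ℂ :=
  ∑ d ∈ n.divisors, ((ArithmeticFunction.moebius d : ℤ) : ℂ) * (d:ℂ)^z / (Nat.totient d : ℂ) *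
    ∑ e ∈ d.divisors, ((ArithmeticFunction.moebius e : ℤ) : ℂ) / (e:ℂ)^z * g4 z (n * e / d)

/-!
Bound each term of the double sum defining `G₄(z, q)` in absolute value. For `m ∣ q`,
`|g₄(z, m)| ≤ τ₄(q) ∏_{p ∣ q} (1 + p^{-σ})³` with `σ = Re z`, since `|Q_j(x)| ≤ (1 + |x|)³`
and `τ₄` is multiplicative and monotone under divisibility. What remains is `∑_{d ∣ q} F(d)` for a
multiplicative `F` supported on squarefree numbers, which equals `∏_{p ∣ q} (1 + F(p))`, and
`1 + F(p) = (p + p^σ)/(p - 1) ≤ 2 (1 + p^{σ-1})`. For `|σ - 1| ≤ r < 1` each Euler factor is at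
most `2³ · 2p^r`, and `∏_{p ∣ q} p ≤ q`.
-/

open Finset ArithmeticFunction
open scoped ArithmeticFunction.sigma ArithmeticFunction.zeta ArithmeticFunction.Moebius

section Tau4

def tau4Finset (n : ℕ) : Finset (Σ _ : ℕ × ℕ, (ℕ × ℕ) × (ℕ × ℕ)) :=
  n.divisorsAntidiagonal.sigma fun ab => ab.1.divisorsAntidiagonal ×ˢ ab.2.divisorsAntidiagonal

lemma mem_tau4Finset {n : ℕ} {ab x y : ℕ × ℕ} :
    ⟨ab, x, y⟩ ∈ tau4Finset n ↔ x.1 * x.2 = ab.1 ∧ y.1 * y.2 = ab.2 ∧ ab.1 * ab.2 = n ∧ n ≠ 0 := by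
  simp only [tau4Finset, mem_sigma, mem_product, Nat.mem_divisorsAntidiagonal]
  constructor
  · rintro ⟨⟨hab, hn⟩, ⟨hx, -⟩, hy, -⟩
    exact ⟨hx, hy, hab, hn⟩
  · rintro ⟨hx, hy, hab, hn⟩
    subst hab
    exact ⟨⟨rfl, hn⟩, ⟨hx, left_ne_zero_of_mul hn⟩, hy, right_ne_zero_of_mul hn⟩

def tau4Equiv {n : ℕ} (hn : n ≠ 0) :
    {p : ℕ × ℕ × ℕ × ℕ // p.1 * p.2.1 * p.2.2.1 * p.2.2.2 = n} ≃ tau4Finset n where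
  toFun := fun ⟨(a, b, c, d), h⟩ =>
    ⟨⟨(a * b, c * d), (a, b), (c, d)⟩, mem_tau4Finset.2 ⟨rfl, rfl, by rw [← h]; ring, hn⟩⟩
  invFun := fun ⟨⟨ab, x, y⟩, h⟩ =>
    ⟨(x.1, x.2, y.1, y.2), by
      obtain ⟨hx, hy, hab, -⟩ := mem_tau4Finset.1 h
      rw [← hab, ← hx, ← hy]; ring⟩
  left_inv _ := rfl
  right_inv := by
    rintro ⟨⟨⟨a, b⟩, x, y⟩, h⟩
    obtain ⟨rfl, rfl, -⟩ := mem_tau4Finset.1 h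
    rfl

lemma card_divisorsAntidiagonal_eq_sigma_zero (n : ℕ) : #n.divisorsAntidiagonal = σ 0 n := by
  rw [sigma_zero_apply, ← Nat.map_div_right_divisors, card_map]

lemma tau4_eq_sigma_zero_mul_sigma_zero {n : ℕ} (hn : n ≠ 0) : tau4 n = (σ 0 * σ 0) n := by
  rw [tau4, Nat.card_congr (tau4Equiv hn), Nat.card_eq_finsetCard, tau4Finset, card_sigma,
    mul_apply]
  simp only [card_product, card_divisorsAntidiagonal_eq_sigma_zero]

lemma tau4_eq_prod_primeFactors {n : ℕ} (hn : n ≠ 0) :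
    tau4 n = ∏ p ∈ n.primeFactors, tau4 (p ^ n.factorization p) := by
  rw [tau4_eq_sigma_zero_mul_sigma_zero hn,
    (isMultiplicative_sigma.mul isMultiplicative_sigma).multiplicative_factorization _ hn,
    Nat.prod_factorization_eq_prod_primeFactors]
  refine prod_congr rfl fun p hp => (tau4_eq_sigma_zero_mul_sigma_zero ?_).symm
  exact pow_ne_zero _ (Nat.prime_of_mem_primeFactors hp).ne_zero

lemma tau4_le_of_dvd {m n : ℕ} (h : m ∣ n) (hn : n ≠ 0) : tau4 m ≤ tau4 n := by
  obtain ⟨k, rfl⟩ := h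
  have hk : 0 < k := Nat.pos_of_ne_zero (right_ne_zero_of_mul hn)
  have : Finite {p : ℕ × ℕ × ℕ × ℕ // p.1 * p.2.1 * p.2.2.1 * p.2.2.2 = m * k} :=
    .of_equiv _ (tau4Equiv hn).symm
  refine Nat.card_le_card_of_injective
    (fun ⟨(a, b, c, d), h⟩ => ⟨(a * k, b, c, d), by rw [← h]; ring⟩) ?_
  rintro ⟨⟨a, b, c, d⟩, _⟩ ⟨⟨a', b', c', d'⟩, _⟩ h
  simp only [Subtype.mk.injEq, Prod.mk.injEq] at h
  obtain ⟨ha, rfl, rfl, rfl⟩ := h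
  obtain rfl := Nat.eq_of_mul_eq_mul_right hk ha
  rfl

end Tau4

section G4Majorant

lemma norm_natCast_div_natCast_add_le (j k : ℕ) : ‖(j / (j + k) : ℂ)‖ ≤ 1 := by
  rw [norm_div, Complex.norm_natCast, ← Nat.cast_add, Complex.norm_natCast]
  exact div_le_one_of_le₀ (by exact_mod_cast j.le_add_right k) (Nat.cast_nonneg _)

lemma norm_Qpoly_le (j : ℕ) (x : ℂ) : ‖Qpoly j x‖ ≤ (1 + ‖x‖) ^ 3 := by
  have h1 : ‖(3 * j / (j + 1) : ℂ)‖ ≤ 3 := by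
    simpa [mul_div_assoc] using norm_natCast_div_natCast_add_le j 1
  have h2 : ‖(3 * j / (j + 2) : ℂ)‖ ≤ 3 := by
    simpa [mul_div_assoc] using norm_natCast_div_natCast_add_le j 2
  have h3 : ‖(j / (j + 3) : ℂ)‖ ≤ 1 := by
    simpa using norm_natCast_div_natCast_add_le j 3
  calc ‖Qpoly j x‖
      ≤ ‖(1 : ℂ)‖ + ‖(3 * j / (j + 1) : ℂ) * x‖ + ‖(3 * j / (j + 2) : ℂ) * x ^ 2‖
          + ‖(j / (j + 3) : ℂ) * x ^ 3‖ :=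
        (norm_sub_le _ _).trans <| by
          gcongr; exact (norm_add_le _ _).trans <| by gcongr; exact norm_sub_le _ _
    _ ≤ 1 + 3 * ‖x‖ + 3 * ‖x‖ ^ 2 + 1 * ‖x‖ ^ 3 := by
        simp only [norm_mul, norm_pow, norm_one]
        gcongr
    _ = (1 + ‖x‖) ^ 3 := by ring

lemma norm_g4_le (z : ℂ) {m : ℕ} (hm : m ≠ 0) :
    ‖g4 z m‖ ≤ tau4 m * ∏ p ∈ m.primeFactors, (1 + (p : ℝ) ^ (-z.re)) ^ 3 := by
  rw [g4, norm_prod, tau4_eq_prod_primeFactors hm, Nat.cast_prod, ← prod_mul_distrib]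
  gcongr with p hp
  rw [norm_mul, Complex.norm_natCast]
  gcongr
  refine (norm_Qpoly_le _ _).trans_eq ?_
  rw [norm_natCast_cpow_of_pos (Nat.prime_of_mem_primeFactors hp).pos, neg_re]

lemma norm_g4_le_of_dvd (z : ℂ) {m n : ℕ} (h : m ∣ n) (hn : n ≠ 0) :
    ‖g4 z m‖ ≤ tau4 n * ∏ p ∈ n.primeFactors, (1 + (p : ℝ) ^ (-z.re)) ^ 3 := by
  refine (norm_g4_le z (ne_zero_of_dvd_ne_zero hn h)).trans ?_
  gcongr
  · exact tau4_le_of_dvd h hn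
  · exact fun p _ _ => one_le_pow₀ (le_add_of_nonneg_right (by positivity))
  · exact Nat.primeFactors_mono h hn

end G4Majorant

section Weights

variable {R : Type*}

def restrictSquarefree [Zero R] (f : ℕ → R) : ArithmeticFunction R :=
  ⟨fun n => if Squarefree n then f n else 0, by simp⟩

lemma restrictSquarefree_apply [Zero R] (f : ℕ → R) (n : ℕ) :
    restrictSquarefree f n = if Squarefree n then f n else 0 :=
  rfl

lemma isMultiplicative_restrictSquarefree [MonoidWithZero R] {f : ℕ → R} (h1 : f 1 = 1)
    (hf : ∀ {m n : ℕ}, m.Coprime n → f (m * n) = f m * f n) :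
    (restrictSquarefree f).IsMultiplicative := by
  refine ⟨by simp [restrictSquarefree_apply, h1], fun {m n} hmn => ?_⟩
  simp only [restrictSquarefree_apply, Nat.squarefree_mul hmn, hf hmn]
  split_ifs <;> simp_all

lemma restrictSquarefree_nonneg [Zero R] [Preorder R] {f : ℕ → R} (hf : ∀ n, 0 ≤ f n) (n : ℕ) :
    0 ≤ restrictSquarefree f n := by
  rw [restrictSquarefree_apply]
  split_ifs
  exacts [hf n, le_rfl]

lemma ArithmeticFunction.IsMultiplicative.sum_divisors_eq_prod_one_add [CommSemiring R]
    {f : ArithmeticFunction R} (hf : f.IsMultiplicative) (hsq : ∀ n, ¬Squarefree n → f n = 0)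
    {n : ℕ} (hn : n ≠ 0) : ∑ d ∈ n.divisors, f d = ∏ p ∈ n.primeFactors, (1 + f p) := by
  rw [← coe_zeta_mul_apply,
    (isMultiplicative_zeta.natCast.mul hf).multiplicative_factorization _ hn,
    Nat.prod_factorization_eq_prod_primeFactors]
  refine prod_congr rfl fun p hp => ?_
  have hp' := Nat.prime_of_mem_primeFactors hp
  obtain ⟨k, hk⟩ := Nat.exists_eq_add_of_lt (hp'.factorization_pos_of_dvd hn
    (Nat.dvd_of_mem_primeFactors hp))
  rw [hk, coe_zeta_mul_apply, Nat.sum_divisors_prime_pow hp', sum_range_succ', sum_range_succ',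
    sum_eq_zero fun i _ => hsq _ ?_, pow_zero, pow_one, hf.map_one, zero_add, add_comm]
  rw [Nat.squarefree_pow_iff hp'.ne_one (by omega)]
  omega

end Weights

section G4Weight

variable {s : ℝ}

/-- `|μ(d)| d^s / φ(d) ∑_{e ∣ d} |μ(e)| e^{-s}`: the absolute values of the coefficients of the
double sum defining `G4 z`, with `s = Re z`. -/
def G4Weight (s : ℝ) : ArithmeticFunction ℝ :=
  (restrictSquarefree fun d => (d : ℝ) ^ s / d.totient).pmul
    ((ζ : ArithmeticFunction ℝ) * restrictSquarefree fun e => (e : ℝ) ^ (-s))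

lemma G4Weight_apply (d : ℕ) :
    G4Weight s d = restrictSquarefree (fun d => (d : ℝ) ^ s / d.totient) d *
      ∑ e ∈ d.divisors, restrictSquarefree (fun e => (e : ℝ) ^ (-s)) e := by
  rw [G4Weight, pmul_apply, coe_zeta_mul_apply]

lemma isMultiplicative_G4Weight : (G4Weight s).IsMultiplicative := by
  refine .pmul (isMultiplicative_restrictSquarefree (by simp) fun {m n} hmn => ?_)
    (isMultiplicative_zeta.natCast.mul
      (isMultiplicative_restrictSquarefree (by simp) fun {m n} _ => ?_))
  · rw [Nat.cast_mul, Real.mul_rpow (Nat.cast_nonneg m) (Nat.cast_nonneg n), Nat.totient_mul hmn,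
      Nat.cast_mul, mul_div_mul_comm]
  · rw [Nat.cast_mul, Real.mul_rpow (Nat.cast_nonneg m) (Nat.cast_nonneg n)]

lemma G4Weight_nonneg (d : ℕ) : 0 ≤ G4Weight s d := by
  rw [G4Weight_apply]
  exact mul_nonneg (restrictSquarefree_nonneg (fun _ => by positivity) _)
    (sum_nonneg fun _ _ => restrictSquarefree_nonneg (fun _ => by positivity) _)

lemma G4Weight_eq_zero_of_not_squarefree {d : ℕ} (hd : ¬Squarefree d) : G4Weight s d = 0 := by
  rw [G4Weight_apply, restrictSquarefree_apply, if_neg hd, zero_mul]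

lemma one_add_G4Weight_prime {p : ℕ} (hp : p.Prime) :
    1 + G4Weight s p = (p + (p : ℝ) ^ s) / (p - 1) := by
  have hp1 : (1 : ℝ) < p := by exact_mod_cast hp.one_lt
  rw [G4Weight_apply, hp.divisors, sum_pair hp.ne_one.symm]
  simp only [restrictSquarefree_apply, if_pos hp.squarefree, if_pos squarefree_one,
    Nat.totient_prime hp, Nat.cast_one, Real.one_rpow, Nat.cast_sub hp.one_le]
  have hp1' : (p : ℝ) - 1 ≠ 0 := by linarith
  have hps : (p : ℝ) ^ s ≠ 0 := by positivity
  rw [Real.rpow_neg (by positivity)]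
  field_simp
  ring

lemma one_add_G4Weight_prime_le {p : ℕ} (hp : p.Prime) :
    1 + G4Weight s p ≤ 2 * (1 + (p : ℝ) ^ (s - 1)) := by
  have hp2 : (2 : ℝ) ≤ p := by exact_mod_cast hp.two_le
  rw [one_add_G4Weight_prime hp, Real.rpow_sub_one (by positivity),
    show 2 * (1 + (p : ℝ) ^ s / p) = (p + (p : ℝ) ^ s) / (p / 2) by field_simp]
  gcongr
  linarith

lemma sum_divisors_G4Weight_le {q : ℕ} (hq : q ≠ 0) :
    ∑ d ∈ q.divisors, G4Weight s d ≤
      2 ^ q.primeFactors.card * ∏ p ∈ q.primeFactors, (1 + (p : ℝ) ^ (s - 1)) := by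
  rw [isMultiplicative_G4Weight.sum_divisors_eq_prod_one_add
    (fun _ => G4Weight_eq_zero_of_not_squarefree) hq, ← prod_const, ← prod_mul_distrib]
  exact prod_le_prod (fun p _ => add_nonneg zero_le_one (G4Weight_nonneg p))
    fun p hp => one_add_G4Weight_prime_le (Nat.prime_of_mem_primeFactors hp)

end G4Weight

section G4Bounds

lemma norm_moebius_mul_cpow_div_totient (z : ℂ) {d : ℕ} (hd : 0 < d) :
    ‖(μ d : ℂ) * (d : ℂ) ^ z / d.totient‖ =
      restrictSquarefree (fun d => (d : ℝ) ^ z.re / d.totient) d := by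
  rw [norm_div, norm_mul, Complex.norm_intCast, norm_natCast_cpow_of_pos hd, Complex.norm_natCast,
    ← Int.cast_abs, abs_moebius, restrictSquarefree_apply]
  split_ifs <;> simp

lemma norm_moebius_div_cpow (z : ℂ) {e : ℕ} (he : 0 < e) :
    ‖(μ e : ℂ) / (e : ℂ) ^ z‖ = restrictSquarefree (fun e => (e : ℝ) ^ (-z.re)) e := by
  rw [norm_div, Complex.norm_intCast, norm_natCast_cpow_of_pos he, ← Int.cast_abs, abs_moebius,
    restrictSquarefree_apply, Real.rpow_neg (Nat.cast_nonneg e)]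
  split_ifs <;> simp [div_eq_mul_inv]

lemma norm_G4_le_sum_G4Weight_mul (z : ℂ) {q : ℕ} (hq : q ≠ 0) :
    ‖G4 z q‖ ≤ (∑ d ∈ q.divisors, G4Weight z.re d) *
      (tau4 q * ∏ p ∈ q.primeFactors, (1 + (p : ℝ) ^ (-z.re)) ^ 3) := by
  rw [G4, sum_mul]
  refine (norm_sum_le _ _).trans (sum_le_sum fun d hd => ?_)
  have hdq := Nat.dvd_of_mem_divisors hd
  rw [norm_mul, norm_moebius_mul_cpow_div_totient z (Nat.pos_of_mem_divisors hd), G4Weight_apply,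
    mul_assoc, sum_mul]
  gcongr
  · exact restrictSquarefree_nonneg (fun _ => by positivity) _
  refine (norm_sum_le _ _).trans (sum_le_sum fun e he => ?_)
  rw [norm_mul, norm_moebius_div_cpow z (Nat.pos_of_mem_divisors he)]
  gcongr
  · exact restrictSquarefree_nonneg (fun _ => by positivity) _
  refine norm_g4_le_of_dvd z ?_ hq
  rw [Nat.mul_div_right_comm hdq]
  exact (mul_dvd_mul_left _ (Nat.dvd_of_mem_divisors he)).trans (Nat.div_mul_cancel hdq).dvd

lemma norm_G4_le (z : ℂ) {q : ℕ} (hq : q ≠ 0) :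
    ‖G4 z q‖ ≤ 2 ^ q.primeFactors.card * (tau4 q : ℝ) *
      ∏ p ∈ q.primeFactors, (1 + (p : ℝ) ^ (-z.re)) ^ 3 * (1 + (p : ℝ) ^ (z.re - 1)) := by
  refine (norm_G4_le_sum_G4Weight_mul z hq).trans ?_
  grw [sum_divisors_G4Weight_le hq, prod_mul_distrib]
  exact le_of_eq (by ring)

lemma one_add_rpow_neg_pow_three_mul_le {x s r : ℝ} (hx : 1 ≤ x) (hs : 0 ≤ s) (hr : 0 ≤ r)
    (hsr : s - 1 ≤ r) : (1 + x ^ (-s)) ^ 3 * (1 + x ^ (s - 1)) ≤ 16 * x ^ r := by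
  have h₁ : x ^ (-s) ≤ 1 := Real.rpow_le_one_of_one_le_of_nonpos hx (by linarith)
  have h₂ : x ^ (s - 1) ≤ x ^ r := Real.rpow_le_rpow_of_exponent_le hx hsr
  have h₃ : 1 ≤ x ^ r := Real.one_le_rpow hx hr
  calc (1 + x ^ (-s)) ^ 3 * (1 + x ^ (s - 1)) ≤ 2 ^ 3 * (2 * x ^ r) := by
        gcongr <;> linarith
    _ = 16 * x ^ r := by ring

lemma prod_primeFactors_rpow_le {q : ℕ} (hq : q ≠ 0) {r : ℝ} (hr : 0 ≤ r) :
    ∏ p ∈ q.primeFactors, (p : ℝ) ^ r ≤ (q : ℝ) ^ r := by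
  rw [Real.finsetProd_rpow _ _ (fun _ _ => Nat.cast_nonneg _), ← Nat.cast_prod]
  gcongr
  exact Nat.le_of_dvd (Nat.pos_of_ne_zero hq) (Nat.prod_primeFactors_dvd q)

lemma prod_primeFactors_one_add_rpow_le {q : ℕ} (hq : q ≠ 0) {s r : ℝ} (hs : 0 ≤ s) (hr : 0 ≤ r)
    (hsr : s - 1 ≤ r) :
    ∏ p ∈ q.primeFactors, (1 + (p : ℝ) ^ (-s)) ^ 3 * (1 + (p : ℝ) ^ (s - 1)) ≤
      16 ^ q.primeFactors.card * (q : ℝ) ^ r := by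
  calc ∏ p ∈ q.primeFactors, (1 + (p : ℝ) ^ (-s)) ^ 3 * (1 + (p : ℝ) ^ (s - 1))
      ≤ ∏ p ∈ q.primeFactors, 16 * (p : ℝ) ^ r :=
        prod_le_prod (fun p _ => by positivity) fun p hp =>
          one_add_rpow_neg_pow_three_mul_le
            (by exact_mod_cast (Nat.prime_of_mem_primeFactors hp).one_le) hs hr hsr
    _ ≤ 16 ^ q.primeFactors.card * (q : ℝ) ^ r := by
        rw [prod_mul_distrib, prod_const]
        grw [prod_primeFactors_rpow_le hq hr]

end G4Bounds

/-- For all `z ∈ ℂ` and `q ≥ 1`,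
`|G₄(z,q)| ≤ 2^{ω(q)} τ₄(q) ∏_{p|q} (1+p^{-Re z})³ (1+p^{Re z - 1})`, and if
`1 - r ≤ Re z ≤ 1 + r` with `r ∈ (0,1)` then `|G₄(z,q)| ≤ 32^{ω(q)} τ₄(q) q^r`. -/
theorem G4_bounds :
    (∀ (z : ℂ) (q : ℕ), 0 < q →
      ‖G4 z q‖ ≤
        2 ^ q.primeFactors.card * (tau4 q : ℝ) *
          ∏ p ∈ q.primeFactors, (1 + (p:ℝ) ^ (-z.re))^3 * (1 + (p:ℝ) ^ (z.re - 1))) ∧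
    (∀ (z : ℂ) (q : ℕ) (r : ℝ), 0 < q → r ∈ Set.Ioo (0:ℝ) 1 →
      1 - r ≤ z.re → z.re ≤ 1 + r →
      ‖G4 z q‖ ≤ 32 ^ q.primeFactors.card * (tau4 q : ℝ) * (q:ℝ) ^ r) := by
  refine ⟨fun z q hq => norm_G4_le z hq.ne', fun z q r hq ⟨hr0, hr1⟩ hs₁ hs₂ => ?_⟩
  calc ‖G4 z q‖
      ≤ 2 ^ q.primeFactors.card * (tau4 q : ℝ) * (16 ^ q.primeFactors.card * (q : ℝ) ^ r) := by
        grw [norm_G4_le z hq.ne',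
          prod_primeFactors_one_add_rpow_le hq.ne' (by linarith) hr0.le (by linarith)]
    _ = 32 ^ q.primeFactors.card * (tau4 q : ℝ) * (q : ℝ) ^ r := by
        rw [show (32 : ℝ) = 2 * 16 by norm_num, mul_pow]
        ring

end
end

section
/- For every prime p, every integer j ≥ 1 and every z ∈ ℂ, G₄(z, p^j) = (p/(p−1)) · (τ₄(p^j) Q_j(p^{−z}) − p^{z−1} τ₄(p^{j−1}) Q_{j−1}(p^{−z})), where Q₀(x) = 1 and, for j ≥ 1, Q_j(x) = 1 − (3j/(j+1)) x + (3j/(j+2)) x² − (j/(j+3)) x³. In particular, G₄(z,p) = (p/(p−1))(4 − p^{z−1} − 6p^{−z} + 4p^{−2z} − p^{−3z}) and G₄(z,p²) = (p/(p−1))((10 − 4p^{z−1}) + (−20 + 6p^{z−1})p^{−z} + (15 − 4p^{z−1})p^{−2z} + (−4 + p^{z−1})p^{−3z}). -/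
open Complex Filter Topology

noncomputable section

/-! Since `μ` vanishes off the squarefree numbers, only the divisors `1` and `p` of `p ^ j`
contribute to the double sum defining `G₄(z, p ^ j)`, which collapses it to
`p / (p - 1) * (g₄(z, p ^ j) - p ^ (z - 1) * g₄(z, p ^ (j - 1)))`. On prime powers `g₄` is
`τ₄ · Q` by definition, and `τ₄(p ^ k) = C(k + 3, 3)` counts the exponent quadruples with sum `k`
(stars and bars); the two explicit formulas are then polynomial identities in `p ^ (-z)`. -/

open Finset ArithmeticFunction
open scoped ArithmeticFunction.Moebius

lemma natCard_quadruple_sum_eq_choose (k : ℕ) :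
    Nat.card {v : ℕ × ℕ × ℕ × ℕ // v.1 + v.2.1 + v.2.2.1 + v.2.2.2 = k} = (k + 3).choose 3 := by
  let e : (Fin 4 → ℕ) ≃ ℕ × ℕ × ℕ × ℕ :=
    { toFun := fun f => (f 0, f 1, f 2, f 3)
      invFun := fun v => ![v.1, v.2.1, v.2.2.1, v.2.2.2]
      left_inv := fun f => by ext i; fin_cases i <;> rfl
      right_inv := fun _ => rfl }
  have hsum (f : Fin 4 → ℕ) :
      ∑ i, f i = k ↔ (e f).1 + (e f).2.1 + (e f).2.2.1 + (e f).2.2.2 = k := by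
    rw [Fin.sum_univ_four]; rfl
  rw [← Nat.card_congr ((Sym.equivNatSumOfFintype (Fin 4) k).trans (e.subtypeEquiv hsum)),
    Nat.card_eq_fintype_card, Sym.card_sym_eq_choose, Fintype.card_fin,
    show 4 + k - 1 = k + 3 by omega, Nat.choose_symm_add]

lemma tau4_prime_pow {p : ℕ} (hp : p.Prime) (k : ℕ) : tau4 (p ^ k) = (k + 3).choose 3 := by
  rw [tau4, ← natCard_quadruple_sum_eq_choose k]
  have hinj := Nat.pow_right_injective hp.two_le
  refine (Nat.card_eq_of_bijective
    (fun v => ⟨(p ^ v.1.1, p ^ v.1.2.1, p ^ v.1.2.2.1, p ^ v.1.2.2.2), by simp [← pow_add, v.2]⟩)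
    ⟨?_, ?_⟩).symm
  · rintro ⟨⟨a, b, c, d⟩, _⟩ ⟨⟨a', b', c', d'⟩, _⟩ h
    simp only [Subtype.mk.injEq, Prod.mk.injEq, hinj.eq_iff] at h
    simp [h]
  · rintro ⟨⟨a, b, c, d⟩, h⟩
    simp only at h
    have hpow (x : ℕ) (hx : x ∣ p ^ k) : ∃ i, p ^ i = x := by
      obtain ⟨i, -, rfl⟩ := (Nat.dvd_prime_pow hp).mp hx
      exact ⟨i, rfl⟩
    obtain ⟨i, rfl⟩ := hpow a (h ▸ ⟨b * c * d, by ring⟩)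
    obtain ⟨i', rfl⟩ := hpow b (h ▸ ⟨p ^ i * c * d, by ring⟩)
    obtain ⟨i'', rfl⟩ := hpow c (h ▸ ⟨p ^ i * p ^ i' * d, by ring⟩)
    obtain ⟨i''', rfl⟩ := hpow d (h ▸ ⟨p ^ i * p ^ i' * p ^ i'', by ring⟩)
    exact ⟨⟨(i, i', i'', i'''), hinj (by simpa [← pow_add] using h)⟩, rfl⟩

lemma Qpoly_zero (x : ℂ) : Qpoly 0 x = 1 := by simp [Qpoly]

lemma g4_prime_pow {p : ℕ} (hp : p.Prime) (z : ℂ) (k : ℕ) :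
    g4 z (p ^ k) = (tau4 (p ^ k) : ℂ) * Qpoly k ((p : ℂ) ^ (-z)) := by
  rcases eq_or_ne k 0 with rfl | hk
  · have htau : tau4 1 = 1 := by simpa using tau4_prime_pow hp 0
    simp [g4, htau, Qpoly_zero]
  · rw [g4, Nat.primeFactors_prime_pow hk hp, prod_singleton, Nat.factorization_pow_self hp]

lemma sum_divisors_prime_pow_moebius_mul {R : Type*} [Ring R] {p j : ℕ} (hp : p.Prime)
    (hj : j ≠ 0) (f : ℕ → R) : ∑ d ∈ (p ^ j).divisors, (μ d : R) * f d = f 1 - f p := by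
  obtain ⟨m, rfl⟩ := Nat.exists_eq_add_of_le' (Nat.one_le_iff_ne_zero.mpr hj)
  rw [Nat.sum_divisors_prime_pow hp, sum_range_succ', sum_range_succ', sum_eq_zero]
  · simp [moebius_apply_prime hp, sub_eq_neg_add]
  · intro i _
    rw [moebius_apply_prime_pow hp (by omega), if_neg (by omega)]
    simp

lemma sum_divisors_prime_moebius_mul {R : Type*} [Ring R] {p : ℕ} (hp : p.Prime) (f : ℕ → R) :
    ∑ d ∈ p.divisors, (μ d : R) * f d = f 1 - f p := by
  simpa using sum_divisors_prime_pow_moebius_mul hp one_ne_zero f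

lemma G4_prime_pow_eq {p : ℕ} (hp : p.Prime) (z : ℂ) {j : ℕ} (hj : j ≠ 0) :
    G4 z (p ^ j) = (p : ℂ) / (p - 1) * (g4 z (p ^ j) - (p : ℂ) ^ (z - 1) * g4 z (p ^ (j - 1))) := by
  have hp0 : (p : ℂ) ≠ 0 := Nat.cast_ne_zero.mpr hp.ne_zero
  have hp1 : (p : ℂ) - 1 ≠ 0 := sub_ne_zero.mpr (by exact_mod_cast hp.one_lt.ne')
  have hpz : (p : ℂ) ^ z ≠ 0 := cpow_ne_zero_iff.mpr (Or.inl hp0)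
  have hφ : (p.totient : ℂ) = p - 1 := by
    rw [Nat.totient_prime hp, Nat.cast_sub hp.one_le, Nat.cast_one]
  have hdiv : p ^ j / p = p ^ (j - 1) := by
    simpa using Nat.pow_div (Nat.one_le_iff_ne_zero.mpr hj) hp.pos
  have hcollapse : G4 z (p ^ j) =
      g4 z (p ^ j) - (p : ℂ) ^ z / (p - 1) * (g4 z (p ^ (j - 1)) - ((p : ℂ) ^ z)⁻¹ * g4 z (p ^ j)) := by
    simp only [G4, mul_div_assoc, div_eq_mul_inv ((μ _ : ℤ) : ℂ), mul_assoc,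
      sum_divisors_prime_pow_moebius_mul hp hj, sum_divisors_prime_moebius_mul hp]
    simp [hφ, hdiv, Nat.mul_div_cancel _ hp.pos]
  rw [hcollapse, cpow_sub _ _ hp0, cpow_one]
  field_simp
  ring

lemma G4_prime_pow {p : ℕ} (hp : p.Prime) (z : ℂ) {j : ℕ} (hj : 1 ≤ j) :
    G4 z (p ^ j) = (p : ℂ) / (p - 1) *
      ((tau4 (p ^ j) : ℂ) * Qpoly j ((p : ℂ) ^ (-z)) -
        (p : ℂ) ^ (z - 1) * (tau4 (p ^ (j - 1)) : ℂ) * Qpoly (j - 1) ((p : ℂ) ^ (-z))) := by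
  rw [G4_prime_pow_eq hp z (by omega), g4_prime_pow hp, g4_prime_pow hp, mul_assoc]

/-- For every prime `p`, `j ≥ 1` and `z ∈ ℂ`,
`G₄(z,p^j) = (p/(p-1)) (τ₄(p^j) Q_j(p^{-z}) - p^{z-1} τ₄(p^{j-1}) Q_{j-1}(p^{-z}))`,
together with the explicit formulas for `G₄(z,p)` and `G₄(z,p²)`. -/
theorem G4_prime_powers :
    ∀ p : ℕ, p.Prime → ∀ z : ℂ,
      (∀ j : ℕ, 1 ≤ j →
        G4 z (p^j) = ((p:ℂ) / ((p:ℂ) - 1)) *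
          ((tau4 (p^j) : ℂ) * Qpoly j ((p:ℂ) ^ (-z)) -
            (p:ℂ) ^ (z-1) * (tau4 (p^(j-1)) : ℂ) * Qpoly (j-1) ((p:ℂ) ^ (-z)))) ∧
      G4 z p = ((p:ℂ) / ((p:ℂ) - 1)) *
        (4 - (p:ℂ) ^ (z-1) - 6 * (p:ℂ) ^ (-z) + 4 * (p:ℂ) ^ (-(2*z)) - (p:ℂ) ^ (-(3*z))) ∧
      G4 z (p^2) = ((p:ℂ) / ((p:ℂ) - 1)) *
        ((10 - 4 * (p:ℂ) ^ (z-1)) + (-20 + 6 * (p:ℂ) ^ (z-1)) * (p:ℂ) ^ (-z) +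
          (15 - 4 * (p:ℂ) ^ (z-1)) * (p:ℂ) ^ (-(2*z)) +
          (-4 + (p:ℂ) ^ (z-1)) * (p:ℂ) ^ (-(3*z))) := by
  intro p hp z
  have hsq : (p : ℂ) ^ (-(2 * z)) = ((p : ℂ) ^ (-z)) ^ 2 := by rw [← mul_neg, cpow_ofNat_mul]
  have hcube : (p : ℂ) ^ (-(3 * z)) = ((p : ℂ) ^ (-z)) ^ 3 := by rw [← mul_neg, cpow_ofNat_mul]
  refine ⟨fun j hj => G4_prime_pow hp z hj, ?_, ?_⟩
  · have h := G4_prime_pow hp z le_rfl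
    rw [tau4_prime_pow hp, tau4_prime_pow hp, pow_one] at h
    rw [h, hsq, hcube]
    congr 1
    norm_num [Nat.choose, Qpoly, Qpoly_zero]
    ring
  · rw [G4_prime_pow hp z one_le_two, tau4_prime_pow hp, tau4_prime_pow hp, hsq, hcube]
    congr 1
    norm_num [Nat.choose, Qpoly]
    ring

end
end
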